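/- For the (2+1)D case: with P² = c²[(2ħ/Δ_x)² sin²(k_xΔ_x/2) + (2ħ/Δ_y)² sin²(k_yΔ_y/2)] and M = mc², the quantity X(k) = sqrt((M² + P²)/(M² + (2ħc/Δ_o)²)) satisfies X(k) ≤ 1 for all k whenever (Δ_o/Δ_x)² + (Δ_o/Δ_y)² ≤ 1. -/

import Mathlib

open Real

/-
The numerator and denominator of `X(k)²` share the mass term `M²`, so it suffices to bound the
lattice momentum: `P² ≤ c² (2ħ/Δ_o)²`. Each factor `sin²(k Δ/2)` is at most `1`, and
`(2ħ/Δ_x)² + (2ħ/Δ_y)² = (2ħ/Δ_o)² ((Δ_o/Δ_x)² + (Δ_o/Δ_y)²) ≤ (2ħ/Δ_o)²` by the Courant-type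
condition.
-/

lemma sq_mul_sin_le_sq (b θ : ℝ) : (b * sin θ) ^ 2 ≤ b ^ 2 := by
  rw [mul_pow]
  exact mul_le_of_le_one_right (sq_nonneg b) (sin_sq_le_one θ)

lemma sq_div_add_sq_div_le_of_courant {a Δo Δx Δy : ℝ} (hΔo : Δo ≠ 0)
    (hr : (Δo / Δx) ^ 2 + (Δo / Δy) ^ 2 ≤ 1) :
    (a / Δx) ^ 2 + (a / Δy) ^ 2 ≤ (a / Δo) ^ 2 :=
  calc (a / Δx) ^ 2 + (a / Δy) ^ 2
      = (a / Δo) ^ 2 * ((Δo / Δx) ^ 2 + (Δo / Δy) ^ 2) := by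
        rw [mul_add, ← mul_pow, ← mul_pow, div_mul_div_cancel₀ hΔo, div_mul_div_cancel₀ hΔo]
    _ ≤ (a / Δo) ^ 2 := mul_le_of_le_one_right (sq_nonneg _) hr

lemma lattice_momentum_sq_le {a Δo Δx Δy : ℝ} (hΔo : Δo ≠ 0)
    (hr : (Δo / Δx) ^ 2 + (Δo / Δy) ^ 2 ≤ 1) (kx ky : ℝ) :
    (a / Δx * sin (kx * Δx / 2)) ^ 2 + (a / Δy * sin (ky * Δy / 2)) ^ 2 ≤ (a / Δo) ^ 2 :=
  (add_le_add (sq_mul_sin_le_sq _ _) (sq_mul_sin_le_sq _ _)).trans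
    (sq_div_add_sq_div_le_of_courant hΔo hr)

theorem stmt_4_general (m c hbar Δo Δx Δy : ℝ)
    (hΔo : 0 < Δo)
    (hr : (Δo / Δx) ^ 2 + (Δo / Δy) ^ 2 ≤ 1)
    (kx ky : ℝ) :
    Real.sqrt (((m * c ^ 2) ^ 2
        + c ^ 2 * ((2 * hbar / Δx * Real.sin (kx * Δx / 2)) ^ 2
          + (2 * hbar / Δy * Real.sin (ky * Δy / 2)) ^ 2))
      / ((m * c ^ 2) ^ 2 + (2 * hbar * c / Δo) ^ 2)) ≤ 1 := by
  have hP := lattice_momentum_sq_le (a := 2 * hbar) hΔo.ne' hr kx ky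
  have hcP : (2 * hbar * c / Δo) ^ 2 = c ^ 2 * (2 * hbar / Δo) ^ 2 := by ring
  rw [sqrt_le_one, hcP]
  exact div_le_one_of_le₀ (by gcongr) (by positivity)

/-- Reality (stability) condition for the (2+1)D staggered-grid Dirac scheme:
`X(k) ≤ 1` for all `k` whenever `(Δ_o/Δ_x)² + (Δ_o/Δ_y)² ≤ 1`, with `Δ_o = cΔt`. -/
theorem stmt_4 (m c hbar Δo Δx Δy : ℝ)
    (hm : 0 ≤ m) (hc : 0 < c) (hbar_pos : 0 < hbar)
    (hΔo : 0 < Δo) (hΔx : 0 < Δx) (hΔy : 0 < Δy)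
    (hr : (Δo / Δx) ^ 2 + (Δo / Δy) ^ 2 ≤ 1)
    (kx ky : ℝ) :
    Real.sqrt (((m * c ^ 2) ^ 2
        + c ^ 2 * ((2 * hbar / Δx * Real.sin (kx * Δx / 2)) ^ 2
          + (2 * hbar / Δy * Real.sin (ky * Δy / 2)) ^ 2))
      / ((m * c ^ 2) ^ 2 + (2 * hbar * c / Δo) ^ 2)) ≤ 1 :=
  stmt_4_general m c hbar Δo Δx Δy hΔo hr kx ky
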